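/- Under the hypotheses that the preconditions of A and B are F-regular, F is Θ-discrete, and each element of Θ is F-known: if η with η(x,y) = ⋀_a □_a ξ_{x,y}^a satisfies the Zig and Zag conditions of the generalized action emulation, then η'(x,y) := ⋁{θ ∈ Θ : θ ⊨ η(x,y)} also satisfies the Zig and Zag conditions. -/

import Mathlib

/-- Modal formulas over label set `A` and proposition set `P`. -/
inductive Form (A P : Type) : Type
  | top : Form A P
  | atom : P → Form A P
  | neg : Form A P → Form A P
  | or : Form A P → Form A P → Form A P
  | dia : A → Form A P → Form A P

namespace Form
variable {A P : Type}
def and (φ ψ : Form A P) : Form A P := Form.neg ((Form.neg φ).or (Form.neg ψ))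
def box (a : A) (φ : Form A P) : Form A P := Form.neg (Form.dia a (Form.neg φ))
def bot : Form A P := Form.neg Form.top
def imp (φ ψ : Form A P) : Form A P := (Form.neg φ).or ψ
end Form

/-- Kripke models. -/
structure Kripke (A P : Type) : Type 1 where
  W : Type
  val : W → P → Prop
  rel : A → W → W → Prop
  actual : Set W

variable {A P : Type}

/-- Satisfaction of a modal formula at a world. -/
def sat (M : Kripke A P) : M.W → Form A P → Prop
  | _, .top => True
  | w, .atom p => M.val w p
  | w, .neg φ => ¬ sat M w φ
  | w, .or φ ψ => sat M w φ ∨ sat M w ψ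
  | w, .dia a φ => ∃ v, M.rel a w v ∧ sat M v φ

/-- Semantic entailment over all Kripke models. -/
def entails (φ ψ : Form A P) : Prop := ∀ (M : Kripke A P) (w : M.W), sat M w φ → sat M w ψ

/-- Semantic equivalence. -/
def equivF (φ ψ : Form A P) : Prop := entails φ ψ ∧ entails ψ φ

def satisfiable (φ : Form A P) : Prop := ∃ (M : Kripke A P) (w : M.W), sat M w φ

def valid (φ : Form A P) : Prop := ∀ (M : Kripke A P) (w : M.W), sat M w φ

/-- Finite disjunction (empty disjunction is `⊥`). -/
def bigOr : List (Form A P) → Form A P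
  | [] => Form.bot
  | φ :: l => φ.or (bigOr l)

/-- Finite conjunction (empty conjunction is `⊤`). -/
def bigAnd : List (Form A P) → Form A P
  | [] => Form.top
  | φ :: l => φ.and (bigAnd l)

/-- `⋀_{a ∈ A} □_a (ξ a)` for a finite label set `A`. -/
noncomputable def boxConj [Fintype A] (ξ : A → Form A P) : Form A P :=
  bigAnd ((Finset.univ : Finset A).toList.map fun a => Form.box a (ξ a))

/-- `R` is a bisimulation between Kripke models `M` and `N`. -/
def IsBisim (M N : Kripke A P) (R : M.W → N.W → Prop) : Prop :=
  ∀ w v, R w v →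
    ((∀ p, M.val w p ↔ N.val v p) ∧
     (∀ a w', M.rel a w w' → ∃ v', N.rel a v v' ∧ R w' v') ∧
     (∀ a v', N.rel a v v' → ∃ w', M.rel a w w' ∧ R w' v'))

/-- Pointed bisimilarity of Kripke models (Zig0/Zag0 on actual worlds). -/
def Bisimilar (M N : Kripke A P) : Prop :=
  ∃ R, IsBisim M N R ∧ (∀ w ∈ M.actual, ∃ v ∈ N.actual, R w v) ∧
       (∀ v ∈ N.actual, ∃ w ∈ M.actual, R w v)

/-- Action models. -/
structure ActionModel (A P : Type) : Type 1 where
  E : Type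
  pre : E → Form A P
  rel : A → E → E → Prop
  actual : Set E

/-- The update product `M ⊗ 𝔄`. -/
def update (M : Kripke A P) (𝔄 : ActionModel A P) : Kripke A P where
  W := {p : M.W × 𝔄.E // sat M p.1 (𝔄.pre p.2)}
  val w p := M.val w.1.1 p
  rel a w v := M.rel a w.1.1 v.1.1 ∧ 𝔄.rel a w.1.2 v.1.2
  actual := {w | w.1.1 ∈ M.actual ∧ w.1.2 ∈ 𝔄.actual}

/-- Action model equivalence: same updating effect (up to bisimilarity) on every Kripke model. -/
def AMEquiv (𝔄 𝔅 : ActionModel A P) : Prop :=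
  ∀ M : Kripke A P, Bisimilar (update M 𝔄) (update M 𝔅)

/-- `S` is an action bisimulation between action models `𝔄` and `𝔅`. -/
def IsActBisim (𝔄 𝔅 : ActionModel A P) (S : 𝔄.E → 𝔅.E → Prop) : Prop :=
  ∀ x y, S x y →
    (equivF (𝔄.pre x) (𝔅.pre y) ∧
     (∀ a x', 𝔄.rel a x x' → satisfiable ((𝔄.pre x).and (Form.dia a (𝔄.pre x'))) →
        ∃ y', 𝔅.rel a y y' ∧ S x' y') ∧
     (∀ a y', 𝔅.rel a y y' → satisfiable ((𝔅.pre y).and (Form.dia a (𝔅.pre y'))) →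
        ∃ x', 𝔄.rel a x x' ∧ S x' y'))

/-- Action bisimilarity of action models (with Zig0/Zag0 on actual events). -/
def ActBisimilar (𝔄 𝔅 : ActionModel A P) : Prop :=
  ∃ S, IsActBisim 𝔄 𝔅 S ∧ (∀ x ∈ 𝔄.actual, ∃ y ∈ 𝔅.actual, S x y) ∧
       (∀ y ∈ 𝔅.actual, ∃ x ∈ 𝔄.actual, S x y)

/-- Zig of the generalized action emulation:
`η(x,y) ⊨ □_a (Pre^𝔄(x') → ⋁_{y →_a y'} (Pre^𝔅(y') ∧ η(x',y')))`, rendered semantically. -/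
def GAEZig (𝔄 𝔅 : ActionModel A P) (η : 𝔄.E → 𝔅.E → Form A P) : Prop :=
  ∀ (a : A) (x : 𝔄.E) (y : 𝔅.E) (x' : 𝔄.E), 𝔄.rel a x x' →
    ∀ (M : Kripke A P) (w v : M.W), sat M w (η x y) → M.rel a w v → sat M v (𝔄.pre x') →
      ∃ y', 𝔅.rel a y y' ∧ sat M v (𝔅.pre y') ∧ sat M v (η x' y')

/-- Zag of the generalized action emulation. -/
def GAEZag (𝔄 𝔅 : ActionModel A P) (η : 𝔄.E → 𝔅.E → Form A P) : Prop :=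
  ∀ (a : A) (x : 𝔄.E) (y : 𝔅.E) (y' : 𝔅.E), 𝔅.rel a y y' →
    ∀ (M : Kripke A P) (w v : M.W), sat M w (η x y) → M.rel a w v → sat M v (𝔅.pre y') →
      ∃ x', 𝔄.rel a x x' ∧ sat M v (𝔄.pre x') ∧ sat M v (η x' y')

/-- Zig0 of the generalized action emulation:
`Pre^𝔄(x) ⊨ ⋁_{y ∈ E₀^𝔅} (Pre^𝔅(y) ∧ η(x,y))` for actual `x`. -/
def GAEZig0 (𝔄 𝔅 : ActionModel A P) (η : 𝔄.E → 𝔅.E → Form A P) : Prop :=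
  ∀ x ∈ 𝔄.actual, ∀ (M : Kripke A P) (w : M.W), sat M w (𝔄.pre x) →
    ∃ y ∈ 𝔅.actual, sat M w (𝔅.pre y) ∧ sat M w (η x y)

/-- Zag0 of the generalized action emulation. -/
def GAEZag0 (𝔄 𝔅 : ActionModel A P) (η : 𝔄.E → 𝔅.E → Form A P) : Prop :=
  ∀ y ∈ 𝔅.actual, ∀ (M : Kripke A P) (w : M.W), sat M w (𝔅.pre y) →
    ∃ x ∈ 𝔄.actual, sat M w (𝔄.pre x) ∧ sat M w (η x y)

/-- `η` is a generalized action emulation witnessing `𝔄 ⇄_G 𝔅`. -/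
def IsGAE (𝔄 𝔅 : ActionModel A P) (η : 𝔄.E → 𝔅.E → Form A P) : Prop :=
  GAEZig 𝔄 𝔅 η ∧ GAEZag 𝔄 𝔅 η ∧ GAEZig0 𝔄 𝔅 η ∧ GAEZag0 𝔄 𝔅 η

/-- `S` is a propositional action emulation witnessing `𝔄 ⇄_P 𝔅`
(Consistency, Zig, Zag, Zig0, Zag0; disjunctions rendered semantically). -/
def IsPAEW (𝔄 𝔅 : ActionModel A P) (S : 𝔄.E → 𝔅.E → Prop) : Prop :=
  (∀ x y, S x y → satisfiable ((𝔄.pre x).and (𝔅.pre y))) ∧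
  (∀ (a : A) x y x', S x y → 𝔄.rel a x x' →
     ∀ (M : Kripke A P) (w : M.W), sat M w (𝔄.pre x') →
       ∃ y', 𝔅.rel a y y' ∧ S x' y' ∧ sat M w (𝔅.pre y')) ∧
  (∀ (a : A) x y y', S x y → 𝔅.rel a y y' →
     ∀ (M : Kripke A P) (w : M.W), sat M w (𝔅.pre y') →
       ∃ x', 𝔄.rel a x x' ∧ S x' y' ∧ sat M w (𝔄.pre x')) ∧
  (∀ x ∈ 𝔄.actual, ∀ (M : Kripke A P) (w : M.W), sat M w (𝔄.pre x) →
     ∃ y ∈ 𝔅.actual, S x y ∧ sat M w (𝔅.pre y)) ∧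
  (∀ y ∈ 𝔅.actual, ∀ (M : Kripke A P) (w : M.W), sat M w (𝔅.pre y) →
     ∃ x ∈ 𝔄.actual, S x y ∧ sat M w (𝔄.pre x))

/-- `S` is an action emulation witnessing `𝔄 ⇄ 𝔅`
(Consistency, Zig, Zag, Zig0, Zag0; disjunctions and boxes rendered semantically). -/
def IsAEW (𝔄 𝔅 : ActionModel A P) (S : 𝔄.E → 𝔅.E → Prop) : Prop :=
  (∀ x y, S x y → satisfiable ((𝔄.pre x).and (𝔅.pre y))) ∧
  (∀ (a : A) x y x', S x y → 𝔄.rel a x x' →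
     ∀ (M : Kripke A P) (w v : M.W), sat M w (𝔄.pre x) → sat M w (𝔅.pre y) →
       M.rel a w v → sat M v (𝔄.pre x') →
       ∃ y', 𝔅.rel a y y' ∧ S x' y' ∧ sat M v (𝔅.pre y')) ∧
  (∀ (a : A) x y y', S x y → 𝔅.rel a y y' →
     ∀ (M : Kripke A P) (w v : M.W), sat M w (𝔄.pre x) → sat M w (𝔅.pre y) →
       M.rel a w v → sat M v (𝔅.pre y') →
       ∃ x', 𝔄.rel a x x' ∧ S x' y' ∧ sat M v (𝔄.pre x')) ∧
  (∀ x ∈ 𝔄.actual, ∀ (M : Kripke A P) (w : M.W), sat M w (𝔄.pre x) →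
     ∃ y ∈ 𝔅.actual, S x y ∧ sat M w (𝔅.pre y)) ∧
  (∀ y ∈ 𝔅.actual, ∀ (M : Kripke A P) (w : M.W), sat M w (𝔅.pre y) →
     ∃ x ∈ 𝔄.actual, S x y ∧ sat M w (𝔄.pre x))

/-- `L₀`: formulas `α` such that if `α` is satisfiable and `α ⊨ □_a φ` then `φ` is valid. -/
def L0 : Set (Form A P) :=
  {α | satisfiable α → ∀ (a : A) (φ : Form A P), entails α (Form.box a φ) → valid φ}

/-- `Φ` is `Ψ`-regular. -/
def Regular (Φ Ψ : Set (Form A P)) : Prop :=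
  ∀ φ ∈ Φ, ∀ ψ ∈ Ψ, entails ψ φ ∨ entails ψ φ.neg

/-- `Φ` is `Ψ`-basis: every `φ ∈ Φ` is equivalent to a disjunction of a subset of `Ψ`
(disjunction rendered semantically). -/
def IsBasisFor (Φ Ψ : Set (Form A P)) : Prop :=
  ∀ φ ∈ Φ, ∃ Ψ' ⊆ Ψ, ∀ (M : Kripke A P) (w : M.W), sat M w φ ↔ ∃ ψ ∈ Ψ', sat M w ψ

/-- `Φ` is `Ψ`-discrete: if `φ ∈ Φ` entails a finite disjunction `⋁_l ⋀_a □_a ξ_l^a`, then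
`φ ⊨ ⋁_l ⋁ G(⋀_a □_a ξ_l^a, Ψ)` (outer disjunctions rendered semantically). -/
def Discrete [Fintype A] (Φ Ψ : Set (Form A P)) : Prop :=
  ∀ φ ∈ Φ, ∀ (L : ℕ) (ξ : Fin L → A → Form A P),
    entails φ (bigOr ((List.finRange L).map fun l => boxConj (ξ l))) →
    ∀ (M : Kripke A P) (w : M.W), sat M w φ →
      ∃ (l : Fin L), ∃ ψ ∈ Ψ, entails ψ (boxConj (ξ l)) ∧ sat M w ψ

/-- `Φ` is `Ψ`-known: if `φ ∈ Φ` and `φ ⊨ □_a ξ`, then `φ ⊨ □_a ⋁ G(ξ, Ψ)`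
(inner disjunction rendered semantically). -/
def Known (Φ Ψ : Set (Form A P)) : Prop :=
  ∀ φ ∈ Φ, ∀ (a : A) (χ : Form A P), entails φ (Form.box a χ) →
    ∀ (M : Kripke A P) (w v : M.W), sat M w φ → M.rel a w v →
      ∃ ψ ∈ Ψ, entails ψ χ ∧ sat M v ψ

/-- `R_a^𝔄(x)`. -/
def Rset (𝔄 : ActionModel A P) (a : A) (x : 𝔄.E) : Set 𝔄.E :=
  {y | satisfiable ((𝔄.pre x).and (Form.dia a (𝔄.pre y)))}

/-- `Q_a^𝔄(x)`. -/
def Qset (𝔄 : ActionModel A P) (a : A) (x : 𝔄.E) : Set 𝔄.E :=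
  {y | 𝔄.rel a x y ∧ satisfiable ((𝔄.pre x).and (Form.dia a (𝔄.pre y)))}

/-- Modal depth. -/
def depth : Form A P → ℕ
  | .top => 0
  | .atom _ => 0
  | .neg φ => depth φ
  | .or φ ψ => max (depth φ) (depth ψ)
  | .dia _ φ => depth φ + 1

/-- Subformulas. -/
def Subf : Form A P → List (Form A P)
  | .top => [.top]
  | .atom p => [.atom p]
  | .neg φ => .neg φ :: Subf φ
  | .or φ ψ => .or φ ψ :: (Subf φ ++ Subf ψ)
  | .dia a φ => .dia a φ :: Subf φ

/-- Single negation. -/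
def singleNeg : Form A P → Form A P
  | .neg φ => φ
  | φ => .neg φ

/-- Closure under subformulas and single negations. -/
def closureF (φ : Form A P) : Set (Form A P) :=
  {χ | χ ∈ Subf φ ∨ ∃ ψ ∈ Subf φ, χ = singleNeg ψ}

/-- Zig for a set-valued emulation `σ` (each `σ(x,y)` standing for `⋁ σ(x,y)`,
rendered semantically). -/
def SigmaZig (𝔄 𝔅 : ActionModel A P) (σ : 𝔄.E → 𝔅.E → Set (Form A P)) : Prop :=
  ∀ (a : A) (x : 𝔄.E) (y : 𝔅.E) (x' : 𝔄.E), 𝔄.rel a x x' →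
    ∀ (M : Kripke A P) (w v : M.W), (∃ θ ∈ σ x y, sat M w θ) → M.rel a w v →
      sat M v (𝔄.pre x') →
      ∃ y', 𝔅.rel a y y' ∧ sat M v (𝔅.pre y') ∧ ∃ θ ∈ σ x' y', sat M v θ

/-- Zag for a set-valued emulation. -/
def SigmaZag (𝔄 𝔅 : ActionModel A P) (σ : 𝔄.E → 𝔅.E → Set (Form A P)) : Prop :=
  ∀ (a : A) (x : 𝔄.E) (y : 𝔅.E) (y' : 𝔅.E), 𝔅.rel a y y' →
    ∀ (M : Kripke A P) (w v : M.W), (∃ θ ∈ σ x y, sat M w θ) → M.rel a w v →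
      sat M v (𝔅.pre y') →
      ∃ x', 𝔄.rel a x x' ∧ sat M v (𝔄.pre x') ∧ ∃ θ ∈ σ x' y', sat M v θ


/-! ### Auxiliary lemmas -/

section IterStableAux

lemma sat_top' {M : Kripke A P} {w : M.W} : sat M w Form.top ↔ True := Iff.rfl
lemma sat_neg' {M : Kripke A P} {w : M.W} {φ : Form A P} :
    sat M w φ.neg ↔ ¬ sat M w φ := Iff.rfl
lemma sat_or' {M : Kripke A P} {w : M.W} {φ ψ : Form A P} :
    sat M w (φ.or ψ) ↔ sat M w φ ∨ sat M w ψ := Iff.rfl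
lemma sat_dia' {M : Kripke A P} {w : M.W} {a : A} {φ : Form A P} :
    sat M w (Form.dia a φ) ↔ ∃ v, M.rel a w v ∧ sat M v φ := Iff.rfl

lemma sat_and' {M : Kripke A P} {w : M.W} {φ ψ : Form A P} :
    sat M w (φ.and ψ) ↔ sat M w φ ∧ sat M w ψ := by
  rw [Form.and, sat_neg', sat_or', sat_neg', sat_neg']; tauto

lemma sat_box' {M : Kripke A P} {w : M.W} {a : A} {φ : Form A P} :
    sat M w (Form.box a φ) ↔ ∀ v, M.rel a w v → sat M v φ := by
  rw [Form.box, sat_neg', sat_dia']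
  constructor
  · intro h v hv
    by_contra hc
    exact h ⟨v, hv, hc⟩
  · rintro h ⟨v, hv, hc⟩
    exact hc (h v hv)

lemma sat_bigAnd' {M : Kripke A P} {w : M.W} {l : List (Form A P)} :
    sat M w (bigAnd l) ↔ ∀ φ ∈ l, sat M w φ := by
  induction l with
  | nil => simp [bigAnd, sat_top']
  | cons φ l ih => rw [bigAnd, sat_and', ih]; simp

lemma sat_bigOr' {M : Kripke A P} {w : M.W} {l : List (Form A P)} :
    sat M w (bigOr l) ↔ ∃ φ ∈ l, sat M w φ := by
  induction l with
  | nil => simp [bigOr, Form.bot, sat_neg', sat_top']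
  | cons φ l ih => rw [bigOr, sat_or', ih]; simp

lemma sat_boxConj' [Fintype A] {M : Kripke A P} {w : M.W} {ξ : A → Form A P} :
    sat M w (boxConj ξ) ↔ ∀ a, sat M w (Form.box a (ξ a)) := by
  rw [boxConj, sat_bigAnd']
  constructor
  · intro h a
    exact h _ (List.mem_map.mpr ⟨a, Finset.mem_toList.mpr (Finset.mem_univ a), rfl⟩)
  · intro h φ hφ
    rcases List.mem_map.mp hφ with ⟨a, -, rfl⟩
    exact h a

/-- Finite satisfiability of a set of formulas. -/
def FinSat (S : Set (Form A P)) : Prop :=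
  ∀ l : List (Form A P), (∀ φ ∈ l, φ ∈ S) →
    ∃ (M : Kripke A P) (w : M.W), ∀ φ ∈ l, sat M w φ

/-- Maximal finitely satisfiable sets. -/
def MCS (S : Set (Form A P)) : Prop :=
  FinSat S ∧ ∀ φ : Form A P, φ ∈ S ∨ φ.neg ∈ S

lemma mcs_not_both {S : Set (Form A P)} (h : MCS S) {φ : Form A P}
    (h1 : φ ∈ S) (h2 : φ.neg ∈ S) : False := by
  obtain ⟨M, w, hw⟩ := h.1 [φ, φ.neg] (by
    intro χ hχ
    simp only [List.mem_cons, List.not_mem_nil, or_false] at hχ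
    rcases hχ with rfl | rfl
    exacts [h1, h2])
  exact (sat_neg'.mp (hw φ.neg (by simp))) (hw φ (by simp))

lemma mcs_mem_of_entails {S : Set (Form A P)} (h : MCS S) (l : List (Form A P))
    (hl : ∀ χ ∈ l, χ ∈ S) {φ : Form A P}
    (hent : ∀ (M : Kripke A P) (w : M.W), (∀ χ ∈ l, sat M w χ) → sat M w φ) : φ ∈ S := by
  rcases h.2 φ with h1 | h1
  · exact h1
  · exfalso
    obtain ⟨M, w, hw⟩ := h.1 (φ.neg :: l) (by
      intro χ hχ
      rcases List.mem_cons.mp hχ with rfl | hχ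
      exacts [h1, hl _ hχ])
    exact (sat_neg'.mp (hw φ.neg (List.mem_cons_self)))
      (hent M w fun χ hχ => hw χ (List.mem_cons_of_mem _ hχ))

lemma exists_mcs_supset {S : Set (Form A P)} (h : FinSat S) : ∃ T, S ⊆ T ∧ MCS T := by
  classical
  have hchainub : ∀ c ⊆ {U : Set (Form A P) | FinSat U}, IsChain (· ⊆ ·) c → c.Nonempty →
      ∃ ub ∈ {U : Set (Form A P) | FinSat U}, ∀ s ∈ c, s ⊆ ub := by
    intro c hcS hchain hcne
    refine ⟨⋃₀ c, ?_, fun s hs => Set.subset_sUnion_of_mem hs⟩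
    intro l hl
    have H : ∀ l' : List (Form A P), (∀ φ ∈ l', φ ∈ ⋃₀ c) → ∃ s ∈ c, ∀ φ ∈ l', φ ∈ s := by
      intro l'
      induction l' with
      | nil =>
        obtain ⟨s, hs⟩ := hcne
        exact fun _ => ⟨s, hs, by simp⟩
      | cons φ l' ih =>
        intro hl'
        obtain ⟨s, hsc, hs⟩ := ih (fun χ hχ => hl' χ (List.mem_cons_of_mem _ hχ))
        obtain ⟨t, htc, hφt⟩ := hl' φ (List.mem_cons_self)
        rcases eq_or_ne s t with rfl | hne
        · refine ⟨s, hsc, fun χ hχ => ?_⟩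
          rcases List.mem_cons.mp hχ with rfl | hχ
          exacts [hφt, hs _ hχ]
        · rcases hchain hsc htc hne with hsub | hsub
          · refine ⟨t, htc, fun χ hχ => ?_⟩
            rcases List.mem_cons.mp hχ with rfl | hχ
            exacts [hφt, hsub (hs _ hχ)]
          · refine ⟨s, hsc, fun χ hχ => ?_⟩
            rcases List.mem_cons.mp hχ with rfl | hχ
            exacts [hsub hφt, hs _ hχ]
    obtain ⟨s, hsc, hs⟩ := H l hl
    exact hcS hsc l hs
  obtain ⟨T, hST, hTmax⟩ := zorn_subset_nonempty {U : Set (Form A P) | FinSat U} hchainub S h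
  have hTfs : FinSat T := hTmax.prop
  refine ⟨T, hST, hTfs, ?_⟩
  intro φ
  have key : FinSat (insert φ T) ∨ FinSat (insert φ.neg T) := by
    by_contra hc
    push_neg at hc
    obtain ⟨h1, h2⟩ := hc
    unfold FinSat at h1 h2
    push_neg at h1 h2
    obtain ⟨l1, hl1S, hl1⟩ := h1
    obtain ⟨l2, hl2S, hl2⟩ := h2
    obtain ⟨M, w, hw⟩ := hTfs ((l1 ++ l2).filter (fun χ => decide (χ ∈ T))) (by
      intro χ hχ
      exact of_decide_eq_true (List.mem_filter.mp hχ).2)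
    have hsatT : ∀ χ, χ ∈ l1 ++ l2 → χ ∈ T → sat M w χ := fun χ hχ hχT =>
      hw χ (List.mem_filter.mpr ⟨hχ, decide_eq_true hχT⟩)
    by_cases hφ : sat M w φ
    · obtain ⟨χ, hχl, hχn⟩ := hl1 M w
      rcases Set.mem_insert_iff.mp (hl1S χ hχl) with rfl | hmem
      · exact hχn hφ
      · exact hχn (hsatT χ (List.mem_append_left _ hχl) hmem)
    · obtain ⟨χ, hχl, hχn⟩ := hl2 M w
      rcases Set.mem_insert_iff.mp (hl2S χ hχl) with rfl | hmem
      · exact hχn (sat_neg'.mpr hφ)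
      · exact hχn (hsatT χ (List.mem_append_right _ hχl) hmem)
  rcases key with k | k
  · exact Or.inl ((hTmax.2 k (Set.subset_insert _ _)) (Set.mem_insert _ _))
  · exact Or.inr ((hTmax.2 k (Set.subset_insert _ _)) (Set.mem_insert _ _))

/-- The canonical model. -/
def canonical (A P : Type) : Kripke A P where
  W := {S : Set (Form A P) // MCS S}
  val Γ p := Form.atom p ∈ Γ.1
  rel a Γ Δ := ∀ χ ∈ Δ.1, Form.dia a χ ∈ Γ.1
  actual := ∅

lemma truth_lemma :
    ∀ (φ : Form A P) (Γ : (canonical A P).W), sat (canonical A P) Γ φ ↔ φ ∈ Γ.1 := by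
  intro φ
  induction φ with
  | top =>
    intro Γ
    constructor
    · intro _
      exact mcs_mem_of_entails Γ.2 [] (by simp) (fun M w _ => trivial)
    · intro _
      trivial
  | atom p =>
    intro Γ
    exact Iff.rfl
  | neg φ ih =>
    intro Γ
    rw [sat_neg', ih Γ]
    constructor
    · intro h
      rcases Γ.2.2 φ with h1 | h1
      exacts [absurd h1 h, h1]
    · intro h hmem
      exact mcs_not_both Γ.2 hmem h
  | or φ ψ ihφ ihψ =>
    intro Γ
    rw [sat_or', ihφ Γ, ihψ Γ]
    constructor
    · rintro (h | h)
      · exact mcs_mem_of_entails Γ.2 [φ] (by simpa using h)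
          (fun M w hs => sat_or'.mpr (Or.inl (hs φ (by simp))))
      · exact mcs_mem_of_entails Γ.2 [ψ] (by simpa using h)
          (fun M w hs => sat_or'.mpr (Or.inr (hs ψ (by simp))))
    · intro hmem
      rcases Γ.2.2 φ with h1 | h1
      · exact Or.inl h1
      rcases Γ.2.2 ψ with h2 | h2
      · exact Or.inr h2
      exfalso
      obtain ⟨M, w, hw⟩ := Γ.2.1 [φ.or ψ, φ.neg, ψ.neg] (by
        intro χ hχ
        simp only [List.mem_cons, List.not_mem_nil, or_false] at hχ
        rcases hχ with rfl | rfl | rfl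
        exacts [hmem, h1, h2])
      rcases sat_or'.mp (hw (φ.or ψ) (List.mem_cons_self)) with hs | hs
      · exact sat_neg'.mp (hw φ.neg (by simp)) hs
      · exact sat_neg'.mp (hw ψ.neg (by simp)) hs
  | dia b φ ih =>
    intro Γ
    rw [sat_dia']
    constructor
    · rintro ⟨Δ, hrel, hsat⟩
      exact hrel φ ((ih Δ).mp hsat)
    · intro hmem
      have helper : ∀ l : List (Form A P),
          (∀ χ ∈ l, χ ∈ insert φ {χ | Form.neg (Form.dia b (Form.neg χ)) ∈ Γ.1}) →
          ∃ lb : List (Form A P), (∀ χ ∈ lb, χ ∈ Γ.1) ∧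
            ∀ (M : Kripke A P) (w v : M.W), (∀ χ ∈ lb, sat M w χ) → M.rel b w v →
              sat M v φ → ∀ χ ∈ l, sat M v χ := by
        intro l
        induction l with
        | nil => exact fun _ => ⟨[], by simp, by simp⟩
        | cons χ l ihl =>
          intro hl
          obtain ⟨lb, hlbΓ, hlb⟩ := ihl (fun χ' h => hl _ (List.mem_cons_of_mem _ h))
          rcases Set.mem_insert_iff.mp (hl χ (List.mem_cons_self)) with rfl | hχb
          · refine ⟨lb, hlbΓ, fun M w v hw hrel hφ χ' hχ' => ?_⟩
            rcases List.mem_cons.mp hχ' with rfl | hχ'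
            exacts [hφ, hlb M w v hw hrel hφ _ hχ']
          · refine ⟨Form.neg (Form.dia b (Form.neg χ)) :: lb,
              fun χ' hχ' => ?_, fun M w v hw hrel hφ χ' hχ' => ?_⟩
            · rcases List.mem_cons.mp hχ' with rfl | hχ'
              exacts [hχb, hlbΓ _ hχ']
            · rcases List.mem_cons.mp hχ' with rfl | hχ'
              · by_contra hcon
                exact sat_neg'.mp (hw _ (List.mem_cons_self))
                  ⟨v, hrel, sat_neg'.mpr hcon⟩
              · exact hlb M w v (fun χ'' h => hw _ (List.mem_cons_of_mem _ h)) hrel hφ _ hχ'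
      have hfs : FinSat (insert φ {χ | Form.neg (Form.dia b (Form.neg χ)) ∈ Γ.1}) := by
        intro l hl
        obtain ⟨lb, hlbΓ, hlb⟩ := helper l hl
        obtain ⟨M, w, hw⟩ := Γ.2.1 (Form.dia b φ :: lb) (by
          intro χ hχ
          rcases List.mem_cons.mp hχ with rfl | hχ
          exacts [hmem, hlbΓ _ hχ])
        obtain ⟨v, hrel, hφv⟩ := sat_dia'.mp (hw _ (List.mem_cons_self))
        exact ⟨M, v, hlb M w v (fun χ hχ => hw χ (List.mem_cons_of_mem _ hχ)) hrel hφv⟩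
      obtain ⟨Δ, hS0Δ, hΔ⟩ := exists_mcs_supset hfs
      have hrel : ∀ χ ∈ Δ, Form.dia b χ ∈ Γ.1 := by
        intro χ hχ
        rcases Γ.2.2 (Form.dia b χ) with h | h
        · exact h
        exfalso
        have hmem2 : Form.neg (Form.dia b (Form.neg (Form.neg χ))) ∈ Γ.1 := by
          refine mcs_mem_of_entails Γ.2 [(Form.dia b χ).neg] ?_ ?_
          · intro χ' hχ'
            rcases List.mem_cons.mp hχ' with rfl | hχ'
            exacts [h, absurd hχ' List.not_mem_nil]
          · intro M w hsat
            have hsw := sat_neg'.mp (hsat _ (List.mem_cons_self))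
            refine sat_neg'.mpr fun hex => ?_
            obtain ⟨v, hv, hvnn⟩ := sat_dia'.mp hex
            exact hsw (sat_dia'.mpr ⟨v, hv, not_not.mp (sat_neg'.mp hvnn)⟩)
        exact mcs_not_both hΔ hχ (hS0Δ (Set.mem_insert_of_mem _ hmem2))
      exact ⟨⟨Δ, hΔ⟩, hrel, (ih ⟨Δ, hΔ⟩).mpr (hS0Δ (Set.mem_insert _ _))⟩

theorem modal_compactness {S : Set (Form A P)} (h : FinSat S) :
    ∃ (M : Kripke A P) (w : M.W), ∀ φ ∈ S, sat M w φ := by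
  obtain ⟨T, hST, hT⟩ := exists_mcs_supset h
  exact ⟨canonical A P, ⟨T, hT⟩, fun φ hφ => (truth_lemma φ ⟨T, hT⟩).mpr (hST hφ)⟩

/-- Core finitization+discreteness step. -/
lemma core_discretize [Fintype A] {F Θ : Set (Form A P)} (hdisc : Discrete F Θ)
    {E' : Type} (g : E' → A → Form A P) (T : Set E') {ψ : Form A P} (hψF : ψ ∈ F)
    (hcover : ∀ (N : Kripke A P) (u : N.W), sat N u ψ → ∃ e ∈ T, sat N u (boxConj (g e))) :
    ∀ (M : Kripke A P) (v : M.W), sat M v ψ →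
      ∃ e ∈ T, ∃ θ ∈ Θ, entails θ (boxConj (g e)) ∧ sat M v θ := by
  have hfin : ∃ ys : List E', (∀ e ∈ ys, e ∈ T) ∧
      ∀ (N : Kripke A P) (u : N.W), sat N u ψ → ∃ e ∈ ys, sat N u (boxConj (g e)) := by
    by_contra hno
    push_neg at hno
    have helper : ∀ l : List (Form A P),
        (∀ χ ∈ l, χ ∈ insert ψ ((fun e => (boxConj (g e)).neg) '' T)) →
        ∃ ys : List E', (∀ e ∈ ys, e ∈ T) ∧
          ∀ (N : Kripke A P) (u : N.W), sat N u ψ →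
            (∀ e ∈ ys, ¬ sat N u (boxConj (g e))) → ∀ χ ∈ l, sat N u χ := by
      intro l
      induction l with
      | nil => exact fun _ => ⟨[], by simp, by simp⟩
      | cons χ l ihl =>
        intro hl
        obtain ⟨ys, hysT, hys⟩ := ihl (fun χ' h => hl _ (List.mem_cons_of_mem _ h))
        rcases Set.mem_insert_iff.mp (hl χ (List.mem_cons_self)) with rfl | ⟨e, heT, rfl⟩
        · refine ⟨ys, hysT, fun N u hu hneg χ' hχ' => ?_⟩
          rcases List.mem_cons.mp hχ' with rfl | hχ'
          exacts [hu, hys N u hu hneg _ hχ']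
        · refine ⟨e :: ys, fun e' he' => ?_, fun N u hu hneg χ' hχ' => ?_⟩
          · rcases List.mem_cons.mp he' with rfl | he'
            exacts [heT, hysT _ he']
          · rcases List.mem_cons.mp hχ' with rfl | hχ'
            · exact sat_neg'.mpr (hneg e (List.mem_cons_self))
            · exact hys N u hu (fun e' h => hneg e' (List.mem_cons_of_mem _ h)) _ hχ'
    have hFS : FinSat (insert ψ ((fun e => (boxConj (g e)).neg) '' T)) := by
      intro l hl
      obtain ⟨ys, hysT, hys⟩ := helper l hl
      obtain ⟨N, u, hu1, hu2⟩ := hno ys hysT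
      exact ⟨N, u, hys N u hu1 hu2⟩
    obtain ⟨N, u, hu⟩ := modal_compactness hFS
    obtain ⟨e, heT, he⟩ := hcover N u (hu ψ (Set.mem_insert _ _))
    exact sat_neg'.mp (hu _ (Set.mem_insert_of_mem _ ⟨e, heT, rfl⟩)) he
  obtain ⟨ys, hysT, hys⟩ := hfin
  intro M v hv
  have hent : entails ψ
      (bigOr ((List.finRange ys.length).map fun l => boxConj ((fun l => g (ys.get l)) l))) := by
    intro N u hu
    obtain ⟨e, he, hsat⟩ := hys N u hu
    obtain ⟨n, rfl⟩ := List.mem_iff_get.mp he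
    exact sat_bigOr'.mpr ⟨_, List.mem_map.mpr ⟨n, List.mem_finRange n, rfl⟩, hsat⟩
  obtain ⟨l, θ, hθΘ, hθent, hθsat⟩ :=
    hdisc ψ hψF ys.length (fun l => g (ys.get l)) hent M v hv
  exact ⟨ys.get l, hysT _ (List.get_mem ys l), θ, hθΘ, hθent, hθsat⟩

/-- Extension of a model with a fresh predecessor of `u` along `a`. -/
def extendPred (N : Kripke A P) (a : A) (u : N.W) : Kripke A P where
  W := Option N.W
  val w p := match w with
    | some s => N.val s p
    | none => False
  rel b w1 w2 := match w1, w2 with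
    | some s, some t => N.rel b s t
    | none, some t => b = a ∧ t = u
    | _, _ => False
  actual := ∅

lemma sat_extendPred {N : Kripke A P} {a : A} {u : N.W} :
    ∀ (φ : Form A P) (s : N.W), sat (extendPred N a u) (some s) φ ↔ sat N s φ := by
  intro φ
  induction φ with
  | top => intro s; exact Iff.rfl
  | atom p => intro s; exact Iff.rfl
  | neg φ ih => intro s; exact not_congr (ih s)
  | or φ ψ ihφ ihψ => intro s; exact or_congr (ihφ s) (ihψ s)
  | dia b φ ih =>
    intro s
    show (∃ v, (extendPred N a u).rel b (some s) v ∧ sat (extendPred N a u) v φ) ↔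
      ∃ v, N.rel b s v ∧ sat N v φ
    constructor
    · rintro ⟨t, hrel, hsat⟩
      cases t with
      | none => exact False.elim hrel
      | some t => exact ⟨t, hrel, (ih t).mp hsat⟩
    · rintro ⟨t, hrel, hsat⟩
      exact ⟨some t, hrel, (ih t).mpr hsat⟩

end IterStableAux

/-- if the preconditions of `𝔄` and `𝔅` are `F`-regular, `F` is `Θ`-discrete
and `Θ` is `F`-known, and `η(x,y) = ⋀_a □_a ξ_{x,y}^a` satisfies the Zig and Zag conditions
of the generalized action emulation, then `η'(x,y) := ⋁ G(η(x,y), Θ)` also satisfies them. -/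
theorem iter_stable [Fintype A] (𝔄 𝔅 : ActionModel A P) (F Θ : Set (Form A P))
    (hreg : Regular (Set.range 𝔄.pre ∪ Set.range 𝔅.pre) F)
    (hdisc : Discrete F Θ) (hknown : Known Θ F)
    (ξ : 𝔄.E → 𝔅.E → A → Form A P)
    (hZig : GAEZig 𝔄 𝔅 (fun x y => boxConj (ξ x y)))
    (hZag : GAEZag 𝔄 𝔅 (fun x y => boxConj (ξ x y))) :
    SigmaZig 𝔄 𝔅 (fun x y => {θ ∈ Θ | entails θ (boxConj (ξ x y))}) ∧
    SigmaZag 𝔄 𝔅 (fun x y => {θ ∈ Θ | entails θ (boxConj (ξ x y))}) := by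
  constructor
  · -- Zig
    intro a x y x' hxx' M w v hθex hwv hprex'
    obtain ⟨θ, ⟨hθΘ, hθent⟩, hθsat⟩ := hθex
    have hbox : entails θ (Form.box a (ξ x y a)) := fun N n hn =>
      (sat_boxConj'.mp (hθent N n hn)) a
    obtain ⟨ψ, hψF, hψξ, hψsat⟩ := hknown θ hθΘ a (ξ x y a) hbox M w v hθsat hwv
    have hψpre : entails ψ (𝔄.pre x') := by
      rcases hreg (𝔄.pre x') (Or.inl ⟨x', rfl⟩) ψ hψF with h | h
      · exact h
      · exact absurd hprex' (sat_neg'.mp (h M v hψsat))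
    have hcover : ∀ (N : Kripke A P) (u : N.W), sat N u ψ →
        ∃ e ∈ {y'' | 𝔅.rel a y y'' ∧ entails ψ (𝔅.pre y'')}, sat N u (boxConj (ξ x' e)) := by
      intro N u hu
      have h0 : sat (extendPred N a u) none (boxConj (ξ x y)) := by
        refine sat_boxConj'.mpr fun b => sat_box'.mpr fun t ht => ?_
        cases t with
        | none => exact False.elim ht
        | some t' =>
          obtain ⟨rfl, rfl⟩ := ht
          exact (sat_extendPred _ _).mpr (hψξ N _ hu)
      obtain ⟨y'', hyy'', hprey'', hbc⟩ :=
        hZig a x y x' hxx' (extendPred N a u) none (some u) h0 ⟨rfl, rfl⟩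
          ((sat_extendPred _ _).mpr (hψpre N u hu))
      refine ⟨y'', ⟨hyy'', ?_⟩, (sat_extendPred _ _).mp hbc⟩
      rcases hreg (𝔅.pre y'') (Or.inr ⟨y'', rfl⟩) ψ hψF with h | h
      · exact h
      · exact absurd ((sat_extendPred _ _).mp hprey'') (sat_neg'.mp (h N u hu))
    obtain ⟨y', ⟨hyy', hψprey'⟩, θ', hθ'Θ, hθ'ent, hθ'sat⟩ :=
      core_discretize hdisc (fun e => ξ x' e) _ hψF hcover M v hψsat
    exact ⟨y', hyy', hψprey' M v hψsat, θ', ⟨hθ'Θ, hθ'ent⟩, hθ'sat⟩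
  · -- Zag
    intro a x y y' hyy' M w v hθex hwv hprey'
    obtain ⟨θ, ⟨hθΘ, hθent⟩, hθsat⟩ := hθex
    have hbox : entails θ (Form.box a (ξ x y a)) := fun N n hn =>
      (sat_boxConj'.mp (hθent N n hn)) a
    obtain ⟨ψ, hψF, hψξ, hψsat⟩ := hknown θ hθΘ a (ξ x y a) hbox M w v hθsat hwv
    have hψpre : entails ψ (𝔅.pre y') := by
      rcases hreg (𝔅.pre y') (Or.inr ⟨y', rfl⟩) ψ hψF with h | h
      · exact h
      · exact absurd hprey' (sat_neg'.mp (h M v hψsat))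
    have hcover : ∀ (N : Kripke A P) (u : N.W), sat N u ψ →
        ∃ e ∈ {x'' | 𝔄.rel a x x'' ∧ entails ψ (𝔄.pre x'')}, sat N u (boxConj (ξ e y')) := by
      intro N u hu
      have h0 : sat (extendPred N a u) none (boxConj (ξ x y)) := by
        refine sat_boxConj'.mpr fun b => sat_box'.mpr fun t ht => ?_
        cases t with
        | none => exact False.elim ht
        | some t' =>
          obtain ⟨rfl, rfl⟩ := ht
          exact (sat_extendPred _ _).mpr (hψξ N _ hu)
      obtain ⟨x'', hxx'', hprex'', hbc⟩ :=
        hZag a x y y' hyy' (extendPred N a u) none (some u) h0 ⟨rfl, rfl⟩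
          ((sat_extendPred _ _).mpr (hψpre N u hu))
      refine ⟨x'', ⟨hxx'', ?_⟩, (sat_extendPred _ _).mp hbc⟩
      rcases hreg (𝔄.pre x'') (Or.inl ⟨x'', rfl⟩) ψ hψF with h | h
      · exact h
      · exact absurd ((sat_extendPred _ _).mp hprex'') (sat_neg'.mp (h N u hu))
    obtain ⟨x', ⟨hxx', hψprex'⟩, θ', hθ'Θ, hθ'ent, hθ'sat⟩ :=
      core_discretize hdisc (fun e => ξ e y') _ hψF hcover M v hψsat
    exact ⟨x', hxx', hψprex' M v hψsat, θ', ⟨hθ'Θ, hθ'ent⟩, hθ'sat⟩
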